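/- arXiv:2111.08005 — 2 statements merged into one kernel-verified Lean document; each statement's English description precedes it below -/
import Mathlib

section
/- Let A = P(Λ)T with T invertible and Λ a diagonal 0/1 matrix, and define the norm ‖a‖_T² := ‖Ta‖₂². For 0 ≤ λ ≤ 1 and given x̂ ∈ ℝ^n, ŷ ∈ ℝ^m, the minimizer over z ∈ ℝ^n of (1−λ)‖z − x̂‖_T² + λ·min{‖z − u‖_T² : u ∈ ℝ^n, Au = ŷ} is z* = T⁻¹[λ·Λ·P⁻¹(Λ)·ŷ + (1−λ)·Λ·T·x̂ + (I − Λ)·T·x̂]. -/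
/-!
Substituting `w = T z` turns `‖·‖_T` into the Euclidean norm, and the constraint `A u = ŷ` into
`v = T u` agreeing with `c = P⁻¹ ŷ` on the coordinates selected by `Λ`. The inner minimum is then
`∑ⱼ Λⱼⱼ (wⱼ - cⱼ)²`, so the objective splits into one scalar quadratic per coordinate:
`(1-λ)(wⱼ - bⱼ)²` off the support of `Λ` and `(1-λ)(wⱼ - bⱼ)² + λ(wⱼ - cⱼ)²` on it, with `b = T x̂`.
These are minimised at `bⱼ` and `λcⱼ + (1-λ)bⱼ` respectively, which is `T z*`.
-/

open Matrix

noncomputable def sqnorm {k : ℕ} (v : Fin k → ℝ) : ℝ := ∑ i, (v i) ^ 2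

section Selection

variable {R ι κ : Type*} [Semiring R] [Fintype κ] [DecidableEq κ] (r : ι → κ)

theorem selection_mulVec (x : κ → R) :
    (of fun i j => if r i = j then (1 : R) else 0) *ᵥ x = x ∘ r := by
  ext i
  simp [mulVec, dotProduct]

theorem selection_mulVec_eq_iff {S : κ → Prop} (hS : ∀ j, S j ↔ ∃ i, r i = j)
    [Fintype ι] [DecidableEq ι] {P : Matrix ι κ R}
    (hP : P = of fun i j => if r i = j then 1 else 0)
    {Pinv : Matrix κ ι R} (hPinv : P * Pinv = 1) (v : κ → R) (y : ι → R) :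
    P *ᵥ v = y ↔ ∀ j, S j → v j = (Pinv *ᵥ y) j := by
  subst hP
  have hy : (Pinv *ᵥ y) ∘ r = y := by
    rw [← selection_mulVec, mulVec_mulVec, hPinv, one_mulVec]
  rw [selection_mulVec]
  constructor
  · rintro rfl j hj
    obtain ⟨i, rfl⟩ := (hS j).1 hj
    exact congrFun hy.symm i
  · intro h
    rw [← hy]
    ext i
    exact h (r i) ((hS (r i)).2 ⟨i, rfl⟩)

end Selection

theorem isLeast_sqnorm_sub {n : ℕ} (d : Fin n → ℝ) (hd : ∀ j, d j = 0 ∨ d j = 1)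
    (w c : Fin n → ℝ) :
    IsLeast {x | ∃ v : Fin n → ℝ, (∀ j, d j = 1 → v j = c j) ∧ x = sqnorm (w - v)}
      (∑ j, d j * (w j - c j) ^ 2) := by
  constructor
  · refine ⟨fun j => if d j = 1 then c j else w j, fun j hj => if_pos hj, ?_⟩
    refine Finset.sum_congr rfl fun j _ => ?_
    rcases hd j with h | h <;> simp [h]
  · rintro x ⟨v, hv, rfl⟩
    refine Finset.sum_le_sum fun j _ => ?_
    rcases hd j with h | h
    · simp [h, sq_nonneg]
    · simp [h, hv j h]

noncomputable def proxObjective {n : ℕ} (lam : ℝ) (d b c w : Fin n → ℝ) : ℝ :=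
  (1 - lam) * sqnorm (w - b) + lam * ∑ j, d j * (w j - c j) ^ 2

theorem weighted_sq_le {lam d : ℝ} (hlam1 : lam ≤ 1) (hd : d = 0 ∨ d = 1) (b c w : ℝ) :
    (1 - lam) * (lam * (d * c) + (1 - lam) * (d * b) + (b - d * b) - b) ^ 2 +
        lam * (d * (lam * (d * c) + (1 - lam) * (d * b) + (b - d * b) - c) ^ 2) ≤
      (1 - lam) * (w - b) ^ 2 + lam * (d * (w - c) ^ 2) := by
  rcases hd with rfl | rfl
  · have : 0 ≤ 1 - lam := by linarith
    simpa using mul_nonneg this (sq_nonneg (w - b))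
  · -- `(1-λ)(w-b)² + λ(w-c)²` is a monic quadratic in `w` with vertex `λc + (1-λ)b`
    nlinarith [sq_nonneg (w - (lam * c + (1 - lam) * b))]

theorem proxObjective_le {n : ℕ} {lam : ℝ} (hlam1 : lam ≤ 1) {d : Fin n → ℝ}
    (hd : ∀ j, d j = 0 ∨ d j = 1) (b c w : Fin n → ℝ) :
    proxObjective lam d b c
        (fun j => lam * (d j * c j) + (1 - lam) * (d j * b j) + (b j - d j * b j)) ≤
      proxObjective lam d b c w := by
  simp only [proxObjective, sqnorm, Pi.sub_apply, Finset.mul_sum, ← Finset.sum_add_distrib]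
  exact Finset.sum_le_sum fun j _ => weighted_sq_le hlam1 (hd j) (b j) (c j) (w j)

theorem stmt4_general (m n : ℕ) (Λ : Matrix (Fin n) (Fin n) ℝ) (r : Fin m → Fin n)
    (hΛdiag : Λ.IsDiag) (hΛ01 : ∀ i, Λ i i = 0 ∨ Λ i i = 1)
    (hrange : ∀ j, Λ j j = 1 ↔ ∃ i, r i = j)
    (P : Matrix (Fin m) (Fin n) ℝ)
    (hP : P = Matrix.of fun i j => if r i = j then (1 : ℝ) else 0)
    (Pinv : Matrix (Fin n) (Fin m) ℝ) (hPinv : P * Pinv = 1)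
    (T : Matrix (Fin n) (Fin n) ℝ) (hT : IsUnit T)
    (lam : ℝ) (hlam1 : lam ≤ 1)
    (xhat : Fin n → ℝ) (yhat : Fin m → ℝ)
    (F : (Fin n → ℝ) → ℝ)
    (hF : F = fun z => (1 - lam) * sqnorm (T.mulVec (z - xhat)) +
      lam * sInf {c : ℝ | ∃ u : Fin n → ℝ, (P * T).mulVec u = yhat ∧
        c = sqnorm (T.mulVec (z - u))})
    (zstar : Fin n → ℝ)
    (hzstar : zstar = T⁻¹.mulVec
      (lam • Λ.mulVec (Pinv.mulVec yhat) + (1 - lam) • Λ.mulVec (T.mulVec xhat) +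
        (1 - Λ).mulVec (T.mulVec xhat))) :
    ∀ z : Fin n → ℝ, F zstar ≤ F z := by
  set d := Λ.diag
  have hΛ : Λ = diagonal d := ((isDiag_iff_diagonal_diag Λ).1 hΛdiag).symm
  have hF' : ∀ z, F z = proxObjective lam d (T *ᵥ xhat) (Pinv *ᵥ yhat) (T *ᵥ z) := by
    intro z
    have hfeasible : {x | ∃ u, (P * T) *ᵥ u = yhat ∧ x = sqnorm (T *ᵥ (z - u))} =
        {x | ∃ v, (∀ j, d j = 1 → v j = (Pinv *ᵥ yhat) j) ∧ x = sqnorm (T *ᵥ z - v)} := by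
      ext x
      simp only [Set.mem_ofPred_eq, ← mulVec_mulVec, mulVec_sub,
        selection_mulVec_eq_iff r hrange hP hPinv]
      exact ((mulVec_surjective_iff_isUnit.2 hT).exists (p := fun v =>
        (∀ j, d j = 1 → v j = (Pinv *ᵥ yhat) j) ∧ x = sqnorm (T *ᵥ z - v))).symm
    rw [hF, proxObjective]
    beta_reduce
    rw [hfeasible, (isLeast_sqnorm_sub d hΛ01 _ _).csInf_eq, mulVec_sub]
  have hTzstar : T *ᵥ zstar = fun j => lam * (d j * (Pinv *ᵥ yhat) j) +
      (1 - lam) * (d j * (T *ᵥ xhat) j) + ((T *ᵥ xhat) j - d j * (T *ᵥ xhat) j) := by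
    rw [hzstar, mulVec_mulVec _ T, mul_nonsing_inv T ((isUnit_iff_isUnit_det T).1 hT), one_mulVec,
      hΛ]
    ext j
    simp only [Pi.add_apply, Pi.smul_apply, smul_eq_mul, sub_mulVec, one_mulVec, Pi.sub_apply,
      mulVec_diagonal]
  intro z
  rw [hF', hF', hTzstar]
  exact proxObjective_le hlam1 hΛ01 _ _ _

/-- The closed-form proximal solution `z* = T⁻¹[λ Λ P⁻¹ ŷ + (1-λ) Λ T x̂ + (I-Λ) T x̂]`
minimizes `z ↦ (1-λ)‖z - x̂‖_T² + λ · min { ‖z - u‖_T² : A u = ŷ }` over `z`,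
where `A = P(Λ) T` and `‖a‖_T² = ‖T a‖₂²`. -/
theorem stmt4 (m n : ℕ) (Λ : Matrix (Fin n) (Fin n) ℝ) (r : Fin m → Fin n)
    (hΛdiag : Λ.IsDiag) (hΛ01 : ∀ i, Λ i i = 0 ∨ Λ i i = 1)
    (hΛtr : Λ.trace = (m : ℝ))
    (hr : StrictMono r) (hrange : ∀ j, Λ j j = 1 ↔ ∃ i, r i = j)
    (P : Matrix (Fin m) (Fin n) ℝ)
    (hP : P = Matrix.of fun i j => if r i = j then (1 : ℝ) else 0)
    (Pinv : Matrix (Fin n) (Fin m) ℝ) (hPinv : P * Pinv = 1)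
    (T : Matrix (Fin n) (Fin n) ℝ) (hT : IsUnit T)
    (lam : ℝ) (hlam0 : 0 ≤ lam) (hlam1 : lam ≤ 1)
    (xhat : Fin n → ℝ) (yhat : Fin m → ℝ)
    (F : (Fin n → ℝ) → ℝ)
    (hF : F = fun z => (1 - lam) * sqnorm (T.mulVec (z - xhat)) +
      lam * sInf {c : ℝ | ∃ u : Fin n → ℝ, (P * T).mulVec u = yhat ∧
        c = sqnorm (T.mulVec (z - u))})
    (zstar : Fin n → ℝ)
    (hzstar : zstar = T⁻¹.mulVec
      (lam • Λ.mulVec (Pinv.mulVec yhat) + (1 - lam) • Λ.mulVec (T.mulVec xhat) +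
        (1 - Λ).mulVec (T.mulVec xhat))) :
    ∀ z : Fin n → ℝ, F zstar ≤ F z :=
  stmt4_general m n Λ r hΛdiag hΛ01 hrange P hP Pinv hPinv T hT lam hlam1 xhat yhat F hF zstar
    hzstar
end

section
/- For a full-rank A ∈ ℝ^{m×n} (m ≤ n) with decomposition A = P(Λ)T, the minimum over u with Au = ŷ of ‖z − u‖_T² equals ‖ΛTz − ΛP⁻¹(Λ)ŷ‖₂², i.e., the T-norm distance from z to the affine constraint set is the Euclidean distance between the Λ-components of Tz and the padded measurement. -/
/-! Substituting `v = T u`, which ranges over all of `ℝⁿ` since `T` is invertible, turns the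
problem into minimising `‖T z - v‖₂²` over the vectors `v` whose entries on the support of `Λ`
(the rows `r` selected by `P`) are prescribed; there they agree with `P⁻¹ ŷ`. The minimum is
attained by copying `T z` off that support, leaving exactly the entries of `Λ (T z - P⁻¹ ŷ)`. -/

open Matrix

section Selection

variable {ι κ : Type*} (R : Type*) [Fintype κ] [DecidableEq κ] [Semiring R]

def selectionMatrix (r : ι → κ) : Matrix ι κ R :=
  of fun i j => if r i = j then 1 else 0

variable {R}

theorem selectionMatrix_mulVec (r : ι → κ) (v : κ → R) :
    selectionMatrix R r *ᵥ v = v ∘ r := by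
  ext i
  simp [selectionMatrix, mulVec, dotProduct]

variable [Fintype ι] [DecidableEq ι]

theorem mulVec_comp_of_selectionMatrix_mul_eq_one {r : ι → κ} {Pinv : Matrix κ ι R}
    (hPinv : selectionMatrix R r * Pinv = 1) (y : ι → R) :
    (Pinv *ᵥ y) ∘ r = y := by
  rw [← selectionMatrix_mulVec, mulVec_mulVec, hPinv, one_mulVec]

theorem selectionMatrix_mulVec_eq_iff {r : ι → κ} {Pinv : Matrix κ ι R}
    (hPinv : selectionMatrix R r * Pinv = 1) (v : κ → R) (y : ι → R) :
    selectionMatrix R r *ᵥ v = y ↔ ∀ j ∈ Set.range r, v j = (Pinv *ᵥ y) j := by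
  conv_lhs => rw [selectionMatrix_mulVec, ← mulVec_comp_of_selectionMatrix_mul_eq_one hPinv y]
  simp [funext_iff]

end Selection

theorem Matrix.IsDiag.mulVec_apply_of_zero_or_one {ι R : Type*} [Fintype ι] [DecidableEq ι]
    [Semiring R] [DecidableEq R] {Λ : Matrix ι ι R} (hΛ : Λ.IsDiag)
    (h01 : ∀ i, Λ i i = 0 ∨ Λ i i = 1)
    (x : ι → R) (j : ι) : (Λ *ᵥ x) j = if Λ j j = 1 then x j else 0 := by
  rw [← hΛ.diagonal_diag, mulVec_diagonal, diagonal_apply_eq, diag_apply]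
  rcases h01 j with h | h
  · simp only [h, zero_mul]
    split_ifs with h10
    · rw [← one_mul (x j), ← h10, zero_mul]
    · rfl
  · simp [h]

theorem isLeast_sqnorm_sub_of_eqOn {n : ℕ} (s : Set (Fin n)) [DecidablePred (· ∈ s)]
    (w p : Fin n → ℝ) :
    IsLeast {c : ℝ | ∃ v : Fin n → ℝ, (∀ j ∈ s, v j = p j) ∧ c = sqnorm (w - v)}
      (sqnorm fun j => if j ∈ s then w j - p j else 0) := by
  constructor
  · refine ⟨fun j => if j ∈ s then p j else w j, fun j hj => if_pos hj, ?_⟩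
    unfold sqnorm
    congr! 2 with j
    simp only [Pi.sub_apply]
    split_ifs <;> simp
  · rintro c ⟨v, hv, rfl⟩
    refine Finset.sum_le_sum fun j _ => ?_
    simp only [Pi.sub_apply]
    split_ifs with hj
    · simp [hv j hj]
    · simpa using sq_nonneg (w j - v j)

theorem stmt14_general (m n : ℕ) (Λ : Matrix (Fin n) (Fin n) ℝ) (r : Fin m → Fin n)
    (hΛdiag : Λ.IsDiag) (hΛ01 : ∀ i, Λ i i = 0 ∨ Λ i i = 1)
    (hrange : ∀ j, Λ j j = 1 ↔ ∃ i, r i = j)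
    (P : Matrix (Fin m) (Fin n) ℝ)
    (hP : P = Matrix.of fun i j => if r i = j then (1 : ℝ) else 0)
    (Pinv : Matrix (Fin n) (Fin m) ℝ) (hPinv : P * Pinv = 1)
    (T : Matrix (Fin n) (Fin n) ℝ) (hT : IsUnit T)
    (z : Fin n → ℝ) (yhat : Fin m → ℝ) :
    IsLeast {c : ℝ | ∃ u : Fin n → ℝ, (P * T).mulVec u = yhat ∧
        c = sqnorm (T.mulVec (z - u))}
      (sqnorm (Λ.mulVec (T.mulVec z) - Λ.mulVec (Pinv.mulVec yhat))) := by
  classical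
  have hsupport : ∀ j, Λ j j = 1 ↔ j ∈ Set.range r := hrange
  have hconstraint (v : Fin n → ℝ) :
      P *ᵥ v = yhat ↔ ∀ j ∈ Set.range r, v j = (Pinv *ᵥ yhat) j := by
    subst hP
    exact selectionMatrix_mulVec_eq_iff hPinv v yhat
  have hset : {c : ℝ | ∃ u : Fin n → ℝ, (P * T) *ᵥ u = yhat ∧ c = sqnorm (T *ᵥ (z - u))} =
      {c | ∃ v : Fin n → ℝ, (∀ j ∈ Set.range r, v j = (Pinv *ᵥ yhat) j) ∧
        c = sqnorm (T *ᵥ z - v)} := by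
    ext c
    simp only [Set.mem_ofPred_eq, ← mulVec_mulVec, mulVec_sub, ← hconstraint]
    exact ((mulVec_surjective_iff_isUnit.2 hT).exists
      (p := fun v => P *ᵥ v = yhat ∧ c = sqnorm (T *ᵥ z - v))).symm
  have hvalue : Λ *ᵥ (T *ᵥ z) - Λ *ᵥ (Pinv *ᵥ yhat) =
      fun j => if j ∈ Set.range r then (T *ᵥ z) j - (Pinv *ᵥ yhat) j else 0 := by
    ext j
    simp only [Pi.sub_apply, hΛdiag.mulVec_apply_of_zero_or_one hΛ01, hsupport]
    split_ifs <;> simp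
  rw [hset, hvalue]
  exact isLeast_sqnorm_sub_of_eqOn _ _ _

/-- For `A = P(Λ) T` full rank, the minimum of `‖z - u‖_T²` over `u` with `A u = ŷ` equals
`‖Λ T z - Λ P⁻¹ ŷ‖₂²` (and it is attained, i.e. it is the least element of the value set). -/
theorem stmt14 (m n : ℕ) (Λ : Matrix (Fin n) (Fin n) ℝ) (r : Fin m → Fin n)
    (hΛdiag : Λ.IsDiag) (hΛ01 : ∀ i, Λ i i = 0 ∨ Λ i i = 1)
    (hΛtr : Λ.trace = (m : ℝ))
    (hr : StrictMono r) (hrange : ∀ j, Λ j j = 1 ↔ ∃ i, r i = j)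
    (P : Matrix (Fin m) (Fin n) ℝ)
    (hP : P = Matrix.of fun i j => if r i = j then (1 : ℝ) else 0)
    (Pinv : Matrix (Fin n) (Fin m) ℝ) (hPinv : P * Pinv = 1)
    (T : Matrix (Fin n) (Fin n) ℝ) (hT : IsUnit T)
    (z : Fin n → ℝ) (yhat : Fin m → ℝ) :
    IsLeast {c : ℝ | ∃ u : Fin n → ℝ, (P * T).mulVec u = yhat ∧
        c = sqnorm (T.mulVec (z - u))}
      (sqnorm (Λ.mulVec (T.mulVec z) - Λ.mulVec (Pinv.mulVec yhat))) :=
  stmt14_general m n Λ r hΛdiag hΛ01 hrange P hP Pinv hPinv T hT z yhat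
end
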